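/- arXiv:1604.08731 — 2 statements merged into one kernel-verified Lean document; each statement's English description precedes it below -/
import Mathlib

section
/- Let f₁, f₂ : Ω → ℝ̄ be functions on a bounded domain Ω with compactification Ω̄¹ such that lim_{Ω ∋ y → x} (f₁(y) − f₂(y)) = 0 for all x ∈ ∂¹Ω (limits in the topology of Ω̄¹). Then the upper Wiener solutions agree: uW f₁ = uW f₂, and likewise uZ f₁ = uZ f₂. -/
open Filter Set Topology

/-!
Outside compact subsets of `Ω` the two boundary data differ by at most `ε`: the set of points
near which `|f₁ - f₂| ≤ ε` is a neighbourhood of the boundary `X \ Ω`, and its complement is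
compact since `X` is. So if `u` belongs to the upper Wiener class of `f₂`, then `u + ε` belongs
to that of `f₁`, whence `uW f₁ ≤ uW f₂ + ε` for every `ε > 0`, and symmetrically.
-/

/-- The filter of approach to a point `x` of the compactification from within `Ω`. -/
def approach {X : Type*} [TopologicalSpace X] (Ω : Set X) (x : X) : Filter ↥Ω :=
  Filter.comap (Subtype.val : ↥Ω → X) (nhds x)

/-- An extended-real-valued function bounded from below by a real constant. -/
def BddBelowE {α : Type*} (u : α → EReal) : Prop :=
  ∃ m : ℝ, ∀ y, (m : EReal) ≤ u y

/-- The upper Wiener class `U^W_f` of `f : Ω → ℝ̄`. -/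
def upperWienerClass {X : Type*} [TopologicalSpace X] (Ω : Set X)
    (SH : (↥Ω → EReal) → Prop) (f : ↥Ω → EReal) : Set (↥Ω → EReal) :=
  {u | SH u ∧ BddBelowE u ∧
    ∃ K : Set X, IsCompact K ∧ K ⊆ Ω ∧ ∀ y : ↥Ω, (y : X) ∉ K → f y ≤ u y}

/-- The upper Wiener solution `uW f`. -/
noncomputable def uW {X : Type*} [TopologicalSpace X] (Ω : Set X)
    (SH : (↥Ω → EReal) → Prop) (f : ↥Ω → EReal) : ↥Ω → EReal :=
  fun z => ⨅ u ∈ upperWienerClass Ω SH f, u z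

namespace EReal

theorem le_of_forall_pos_le_add_coe {a b : EReal} (h : ∀ ε : ℝ, 0 < ε → a ≤ b + ε) : a ≤ b := by
  have hb : Tendsto (fun ε : ℝ => b + ε) (𝓝[>] 0) (𝓝 b) := by
    have := (continuousAt_add (p := (b, 0)) (.inr zero_ne_bot) (.inr zero_ne_top)).tendsto.comp
      ((tendsto_const_nhds (x := b)).prodMk_nhds
        ((continuous_coe_real_ereal.tendsto 0).mono_left (nhdsWithin_le_nhds (s := Ioi 0))))
    simpa only [Function.comp_def, add_zero] using this
  exact ge_of_tendsto hb (eventually_nhdsWithin_of_forall h)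

theorem le_add_of_sub_le_coe {a b : EReal} {ε : ℝ} (h : a - b ≤ ε) : a ≤ b + ε := by
  rw [add_comm]
  exact (sub_le_iff_le_add (.inr (coe_ne_top ε)) (.inr (coe_ne_bot ε))).1 h

theorem le_add_of_neg_coe_le_sub {a b : EReal} {ε : ℝ} (h : -(ε : EReal) ≤ a - b) :
    b ≤ a + ε := by
  induction a using EReal.rec <;> induction b using EReal.rec <;>
    simp_all [sub_eq_add_neg, ← coe_neg, ← coe_add]
  linarith

end EReal

section Cocompact

variable {X : Type*} [TopologicalSpace X] {Ω : Set X}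

theorem eventually_cocompact_subtype_iff {p : Ω → Prop} :
    (∀ᶠ y in cocompact Ω, p y) ↔
      ∃ K : Set X, IsCompact K ∧ K ⊆ Ω ∧ ∀ y : Ω, (y : X) ∉ K → p y := by
  rw [hasBasis_cocompact.eventually_iff]
  constructor
  · rintro ⟨s, hs, hps⟩
    exact ⟨(↑) '' s, Subtype.isCompact_iff.1 hs, Subtype.coe_image_subset Ω s,
      fun y hy => hps fun hys => hy (mem_image_of_mem _ hys)⟩
  · rintro ⟨K, hK, hKΩ, hp⟩
    refine ⟨Subtype.val ⁻¹' K, Subtype.isCompact_iff.2 ?_, fun y hy => hp y hy⟩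
    rwa [Subtype.image_preimage_coe, inter_eq_right.2 hKΩ]

theorem tendsto_cocompact_of_forall_tendsto_approach [CompactSpace X] {α : Type*}
    {g : Ω → α} {l : Filter α} (h : ∀ x ∉ Ω, Tendsto g (approach Ω x) l) :
    Tendsto g (cocompact Ω) l := by
  intro s hs
  have hnear : ∀ᶠ x in 𝓝ˢ Ωᶜ, ∀ y : Ω, (y : X) = x → g y ∈ s :=
    eventually_nhdsSet_iff_forall.2 fun x hx => eventually_comap.1 (h x hx hs)
  obtain ⟨U, hU, hΩU, hUs⟩ := mem_nhdsSet_iff_exists.1 hnear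
  exact eventually_cocompact_subtype_iff.2 ⟨Uᶜ, hU.isClosed_compl.isCompact,
    compl_subset_comm.1 hΩU, fun y hy => hUs (not_not.1 hy) y rfl⟩

end Cocompact

theorem BddBelowE.add_coe {α : Type*} {u : α → EReal} (hu : BddBelowE u) (c : ℝ) :
    BddBelowE fun y => u y + c := by
  obtain ⟨m, hm⟩ := hu
  exact ⟨m + c, fun y => by simpa only [EReal.coe_add] using add_le_add_left (hm y) _⟩

section UpperWiener

variable {X : Type*} [TopologicalSpace X] {Ω : Set X} {P : (Ω → EReal) → Prop}
  {f g u : Ω → EReal}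

theorem mem_upperWienerClass_iff :
    u ∈ upperWienerClass Ω P f ↔ P u ∧ BddBelowE u ∧ ∀ᶠ y in cocompact Ω, f y ≤ u y := by
  rw [eventually_cocompact_subtype_iff]
  rfl

theorem add_coe_mem_upperWienerClass (hP : ∀ u (c : ℝ), P u → P fun y => u y + c)
    (hu : u ∈ upperWienerClass Ω P g) {ε : ℝ} (hfg : ∀ᶠ y in cocompact Ω, f y ≤ g y + ε) :
    (fun y => u y + ε) ∈ upperWienerClass Ω P f := by
  obtain ⟨hPu, hbdd, hgu⟩ := mem_upperWienerClass_iff.1 hu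
  refine mem_upperWienerClass_iff.2 ⟨hP u ε hPu, hbdd.add_coe ε, ?_⟩
  filter_upwards [hfg, hgu] with y hfy hgy
  exact hfy.trans (add_le_add_left hgy _)

theorem uW_le_uW_of_eventually_le_add (hP : ∀ u (c : ℝ), P u → P fun y => u y + c)
    (hfg : ∀ ε : ℝ, 0 < ε → ∀ᶠ y in cocompact Ω, f y ≤ g y + ε) :
    uW Ω P f ≤ uW Ω P g := fun _ =>
  le_iInf₂ fun u hu => EReal.le_of_forall_pos_le_add_coe fun ε hε =>
    iInf₂_le (fun y => u y + ε) (add_coe_mem_upperWienerClass hP hu (hfg ε hε))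

theorem uW_eq_uW_of_tendsto_sub (hP : ∀ u (c : ℝ), P u → P fun y => u y + c)
    (hfg : Tendsto (fun y => f y - g y) (cocompact Ω) (𝓝 0)) : uW Ω P f = uW Ω P g := by
  refine le_antisymm (uW_le_uW_of_eventually_le_add hP fun ε hε => ?_)
    (uW_le_uW_of_eventually_le_add hP fun ε hε => ?_)
  · filter_upwards [hfg.eventually (eventually_le_nhds (EReal.coe_pos.2 hε))] with y hy
    exact EReal.le_add_of_sub_le_coe hy
  · have hneg : -(ε : EReal) < 0 := by exact_mod_cast neg_neg_of_pos hε
    filter_upwards [hfg.eventually (eventually_ge_nhds hneg)] with y hy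
    exact EReal.le_add_of_neg_coe_le_sub hy

end UpperWiener

theorem stmt_16_general {X : Type*} [TopologicalSpace X] [CompactSpace X]
    (Ω : Set X)
    (SH Dp : (↥Ω → EReal) → Prop)
    (hshiftSH : ∀ (u : ↥Ω → EReal) (c : ℝ), SH u → SH (fun y => u y + (c : EReal)))
    (hshiftDp : ∀ (u : ↥Ω → EReal) (c : ℝ), Dp u → Dp (fun y => u y + (c : EReal)))
    (f₁ f₂ : ↥Ω → EReal)
    (hlim : ∀ x : X, x ∉ Ω →
      Tendsto (fun y : ↥Ω => f₁ y - f₂ y) (approach Ω x) (nhds (0 : EReal))) :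
    (∀ z, uW Ω SH f₁ z = uW Ω SH f₂ z) ∧
    (∀ z, uW Ω (fun u => SH u ∧ Dp u) f₁ z = uW Ω (fun u => SH u ∧ Dp u) f₂ z) := by
  have hsub := tendsto_cocompact_of_forall_tendsto_approach hlim
  have hshift : ∀ (u : Ω → EReal) (c : ℝ), SH u ∧ Dp u →
      SH (fun y => u y + c) ∧ Dp (fun y => u y + c) :=
    fun u c hu => ⟨hshiftSH u c hu.1, hshiftDp u c hu.2⟩
  exact ⟨congrFun (uW_eq_uW_of_tendsto_sub hshiftSH hsub),
    congrFun (uW_eq_uW_of_tendsto_sub hshift hsub)⟩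

/-- let `Ω` be a bounded domain with compactification `X = Ω̄¹`, and
let `f₁, f₂ : Ω → ℝ̄` satisfy `lim_{Ω ∋ y → x} (f₁(y) − f₂(y)) = 0` for every
boundary point `x ∈ ∂¹Ω`.  Then `uW f₁ = uW f₂` and `uZ f₁ = uZ f₂`.  Here `SH` is
the (translation-invariant) class of superharmonic functions and the Sobolev
version restricts the class to the (translation-invariant) Dirichlet space `Dp`. -/
theorem stmt_16 {X : Type*} [TopologicalSpace X] [CompactSpace X] [T2Space X]
    (Ω : Set X) (hopen : IsOpen Ω) (hdense : Dense Ω) (hne : Ω.Nonempty)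
    (SH Dp : (↥Ω → EReal) → Prop)
    (hshiftSH : ∀ (u : ↥Ω → EReal) (c : ℝ), SH u → SH (fun y => u y + (c : EReal)))
    (hshiftDp : ∀ (u : ↥Ω → EReal) (c : ℝ), Dp u → Dp (fun y => u y + (c : EReal)))
    (f₁ f₂ : ↥Ω → EReal)
    (hlim : ∀ x : X, x ∉ Ω →
      Tendsto (fun y : ↥Ω => f₁ y - f₂ y) (approach Ω x) (nhds (0 : EReal))) :
    (∀ z, uW Ω SH f₁ z = uW Ω SH f₂ z) ∧
    (∀ z, uW Ω (fun u => SH u ∧ Dp u) f₁ z = uW Ω (fun u => SH u ∧ Dp u) f₂ z) :=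
  stmt_16_general Ω SH Dp hshiftSH hshiftDp f₁ f₂ hlim
end

section
/- Let Ω be a bounded domain with compactification Ω̄¹ and let f : Ω̄¹ → ℝ̄ be upper semicontinuous. Then lW(f|_Ω) ≤ lP_{Ω¹}(f|_{∂¹Ω}) and lZ(f|_Ω) ≤ lS_{Ω¹}(f|_{∂¹Ω}). If moreover f < ∞ on ∂¹Ω, then also uW(f|_Ω) ≤ uP_{Ω¹}(f|_{∂¹Ω}) and uZ(f|_Ω) ≤ uS_{Ω¹}(f|_{∂¹Ω}). -/
open Filter Set

/-- The upper (Perron) class of a boundary function `f : ∂¹Ω → ℝ̄`. -/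
def upperPerronClass {X : Type*} [TopologicalSpace X] (Ω : Set X)
    (SH : (↥Ω → EReal) → Prop) (f : {x : X // x ∉ Ω} → EReal) :
    Set (↥Ω → EReal) :=
  {u | SH u ∧ BddBelowE u ∧
    ∀ x : {x : X // x ∉ Ω}, f x ≤ liminf u (approach Ω (x : X))}

/-- The upper Perron solution `uP_{Ω¹} f`. -/
noncomputable def uP {X : Type*} [TopologicalSpace X] (Ω : Set X)
    (SH : (↥Ω → EReal) → Prop) (f : {x : X // x ∉ Ω} → EReal) : ↥Ω → EReal :=
  fun z => ⨅ u ∈ upperPerronClass Ω SH f, u z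

/-- The lower Perron solution `lP_{Ω¹} f := -uP_{Ω¹}(-f)`. -/
noncomputable def lP {X : Type*} [TopologicalSpace X] (Ω : Set X)
    (SH : (↥Ω → EReal) → Prop) (f : {x : X // x ∉ Ω} → EReal) : ↥Ω → EReal :=
  fun z => - uP Ω SH (fun x => - f x) z

/-- The lower Wiener solution `lW f := -uW(-f)`. -/
noncomputable def lW {X : Type*} [TopologicalSpace X] (Ω : Set X)
    (SH : (↥Ω → EReal) → Prop) (f : ↥Ω → EReal) : ↥Ω → EReal :=
  fun z => - uW Ω SH (fun y => - f y) z

/-!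
A Wiener upper function `u` dominates `g` off a compact subset of `Ω`, hence on a
neighbourhood of every boundary point; if `g` is lower semicontinuous this makes
`u` a Perron upper function of `g`. For `g = -f` the Perron infimum is thus taken
over a larger class than the Wiener one, and negating gives the lower inequalities.

Conversely, let `u` be a Perron upper function of an upper semicontinuous `f` with
`f < ∞` on the boundary, and let `ε > 0`. Near each boundary point `f < u + ε`, and
since the boundary is compact these neighbourhoods leave out only a compact subset
of `Ω`. So `u + ε` is a Wiener upper function of `f`, and letting `ε → 0` gives the
two upper inequalities.
-/

open Topology

lemma EReal.le_of_forall_pos_le_add {a b : EReal} (h : ∀ ε : ℝ, 0 < ε → a ≤ b + ε) :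
    a ≤ b := by
  refine EReal.le_of_forall_lt_iff_le.1 fun z hbz => ?_
  obtain ⟨w, hbw, hwz⟩ := EReal.exists_between_coe_real hbz
  calc a ≤ b + (z - w : ℝ) := h (z - w) (_root_.sub_pos.2 (EReal.coe_lt_coe_iff.1 hwz))
    _ ≤ w + (z - w : ℝ) := by gcongr
    _ = z := by norm_cast; ring

section

variable {X : Type*} [TopologicalSpace X] (Ω : Set X)

lemma LowerSemicontinuousAt.le_liminf_approach {g : X → EReal} {x : X}
    (hg : LowerSemicontinuousAt g x) :
    g x ≤ liminf (fun y : ↥Ω => g y) (approach Ω x) :=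
  (le_liminf_iff (by isBoundedDefault) (by isBoundedDefault)).2 fun _ hb =>
    (hg _ hb).comap Subtype.val

lemma upperWienerClass_subset_upperPerronClass [T2Space X] (SH : (↥Ω → EReal) → Prop)
    {g : X → EReal} (hg : LowerSemicontinuous g) :
    upperWienerClass Ω SH (fun y : ↥Ω => g y) ⊆
      upperPerronClass Ω SH (fun x : {x : X // x ∉ Ω} => g x) := by
  rintro u ⟨hsh, hbdd, K, hK, hKΩ, hgu⟩
  refine ⟨hsh, hbdd, fun x => ?_⟩
  have hKc : Kᶜ ∈ 𝓝 (x : X) := hK.isClosed.compl_mem_nhds fun hx => x.2 (hKΩ hx)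
  have hev : ∀ᶠ y : ↥Ω in approach Ω x, g y ≤ u y :=
    Filter.eventually_of_mem (Filter.preimage_mem_comap hKc) hgu
  exact (LowerSemicontinuousAt.le_liminf_approach Ω (hg x)).trans (liminf_le_liminf hev)

lemma lW_le_lP [T2Space X] (SH : (↥Ω → EReal) → Prop) {f : X → EReal}
    (hf : UpperSemicontinuous f) (z : ↥Ω) :
    lW Ω SH (fun y : ↥Ω => f y) z ≤ lP Ω SH (fun x : {x : X // x ∉ Ω} => f x) z :=
  EReal.neg_le_neg_iff.2 <| biInf_mono <| upperWienerClass_subset_upperPerronClass Ω SH <|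
    continuous_neg.comp_upperSemicontinuous_antitone hf EReal.neg_strictAnti.antitone

lemma eventually_approach_le_add {f : X → EReal} {u : ↥Ω → EReal} {x : X} {ε : ℝ}
    (hf : UpperSemicontinuousAt f x) (hfx : f x ≠ ⊤) (hu : BddBelowE u)
    (hfu : f x ≤ liminf u (approach Ω x)) (hε : 0 < ε) :
    ∀ᶠ y : ↥Ω in approach Ω x, f y ≤ u y + ε := by
  set L := liminf u (approach Ω x)
  obtain ⟨m, hm⟩ := hu
  have hL : L ≠ ⊥ :=
    ne_bot_of_le_ne_bot (EReal.coe_ne_bot m) (le_liminf_of_le (by isBoundedDefault) (.of_forall hm))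
  have hfL : f x < L + ε := by
    simpa [add_comm L] using EReal.add_lt_add_of_lt_of_le' (EReal.coe_pos.2 hε) hfu hL
      fun _ hfx' => absurd hfx' hfx
  obtain ⟨t, hft, htL⟩ := EReal.exists_between_coe_real hfL
  have hfy : ∀ᶠ y : ↥Ω in approach Ω x, f y < t := (hf t hft).comap Subtype.val
  have huy : ∀ᶠ y : ↥Ω in approach Ω x, (t : EReal) - ε < u y :=
    eventually_lt_of_lt_liminf (EReal.sub_lt_of_lt_add htL)
  filter_upwards [hfy, huy] with y hfy huy
  exact hfy.le.trans
    ((EReal.sub_lt_iff (.inl (EReal.coe_ne_bot ε)) (.inl (EReal.coe_ne_top ε))).1 huy).le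

lemma exists_isCompact_subset_of_eventually_approach [CompactSpace X] {P : ↥Ω → Prop}
    (hP : ∀ x ∉ Ω, ∀ᶠ y in approach Ω x, P y) :
    ∃ K : Set X, IsCompact K ∧ K ⊆ Ω ∧ ∀ y : ↥Ω, (y : X) ∉ K → P y := by
  set U := {x : X | ∀ᶠ z in 𝓝 x, ∀ hz : z ∈ Ω, P ⟨z, hz⟩}
  refine ⟨Uᶜ, isOpen_setOfPred_eventually_nhds.isClosed_compl.isCompact,
    fun x hxU => by_contra fun hx => hxU ?_, fun y hy => (not_not.1 hy).self_of_nhds y.2⟩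
  have hPx := hP x hx
  rw [approach, eventually_comap] at hPx
  filter_upwards [hPx] with z hz hzΩ using hz ⟨z, hzΩ⟩ rfl

variable [CompactSpace X] {SH : (↥Ω → EReal) → Prop}
  (hshift : ∀ (u : ↥Ω → EReal) (c : ℝ), SH u → SH (fun y => u y + (c : EReal)))
  {f : X → EReal} (hf : UpperSemicontinuous f) (hfin : ∀ x : X, x ∉ Ω → f x ≠ ⊤)
include hshift hf hfin

lemma add_const_mem_upperWienerClass {u : ↥Ω → EReal}
    (hu : u ∈ upperPerronClass Ω SH (fun x : {x : X // x ∉ Ω} => f x)) {ε : ℝ} (hε : 0 < ε) :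
    (fun y => u y + (ε : EReal)) ∈ upperWienerClass Ω SH (fun y : ↥Ω => f y) := by
  obtain ⟨hsh, hbdd, hfu⟩ := hu
  obtain ⟨m, hm⟩ := hbdd
  refine ⟨hshift u ε hsh,
    ⟨m, fun y => (hm y).trans (le_add_of_nonneg_right (EReal.coe_nonneg.2 hε.le))⟩, ?_⟩
  exact exists_isCompact_subset_of_eventually_approach Ω fun x hx =>
    eventually_approach_le_add Ω (hf x) (hfin x hx) ⟨m, hm⟩ (hfu ⟨x, hx⟩) hε

lemma uW_le_uP (z : ↥Ω) :
    uW Ω SH (fun y : ↥Ω => f y) z ≤ uP Ω SH (fun x : {x : X // x ∉ Ω} => f x) z :=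
  le_iInf₂ fun _ hu => EReal.le_of_forall_pos_le_add fun _ hε =>
    iInf₂_le _ (add_const_mem_upperWienerClass Ω hshift hf hfin hu hε)

end

theorem stmt_17_general {X : Type*} [TopologicalSpace X] [CompactSpace X] [T2Space X]
    (Ω : Set X)
    (SH Dp : (↥Ω → EReal) → Prop)
    (hshiftSH : ∀ (u : ↥Ω → EReal) (c : ℝ), SH u → SH (fun y => u y + (c : EReal)))
    (hshiftDp : ∀ (u : ↥Ω → EReal) (c : ℝ), Dp u → Dp (fun y => u y + (c : EReal)))
    (f : X → EReal) (husc : UpperSemicontinuous f) :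
    (∀ z, lW Ω SH (fun y : ↥Ω => f y) z ≤
        lP Ω SH (fun x : {x : X // x ∉ Ω} => f x) z) ∧
    (∀ z, lW Ω (fun u => SH u ∧ Dp u) (fun y : ↥Ω => f y) z ≤
        lP Ω (fun u => SH u ∧ Dp u) (fun x : {x : X // x ∉ Ω} => f x) z) ∧
    ((∀ x : X, x ∉ Ω → f x ≠ ⊤) →
      (∀ z, uW Ω SH (fun y : ↥Ω => f y) z ≤
          uP Ω SH (fun x : {x : X // x ∉ Ω} => f x) z) ∧
      (∀ z, uW Ω (fun u => SH u ∧ Dp u) (fun y : ↥Ω => f y) z ≤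
          uP Ω (fun u => SH u ∧ Dp u) (fun x : {x : X // x ∉ Ω} => f x) z)) := by
  have hshiftSHDp : ∀ (u : ↥Ω → EReal) (c : ℝ), SH u ∧ Dp u →
      SH (fun y => u y + (c : EReal)) ∧ Dp (fun y => u y + (c : EReal)) :=
    fun u c hu => ⟨hshiftSH u c hu.1, hshiftDp u c hu.2⟩
  exact ⟨lW_le_lP Ω SH husc, lW_le_lP Ω _ husc, fun hfin =>
    ⟨uW_le_uP Ω hshiftSH husc hfin, uW_le_uP Ω hshiftSHDp husc hfin⟩⟩

/-- let `Ω` be a bounded domain with compactification `X = Ω̄¹` and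
let `f : Ω̄¹ → ℝ̄` be upper semicontinuous.  Then `lW(f|_Ω) ≤ lP_{Ω¹}(f|_{∂¹Ω})` and
`lZ(f|_Ω) ≤ lS_{Ω¹}(f|_{∂¹Ω})`.  If moreover `f < ∞` on `∂¹Ω`, then also
`uW(f|_Ω) ≤ uP_{Ω¹}(f|_{∂¹Ω})` and `uZ(f|_Ω) ≤ uS_{Ω¹}(f|_{∂¹Ω})`.  Here `SH` is
the (translation-invariant) class of superharmonic functions and the Sobolev
versions restrict the classes to the (translation-invariant) Dirichlet space `Dp`. -/
theorem stmt_17 {X : Type*} [TopologicalSpace X] [CompactSpace X] [T2Space X]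
    (Ω : Set X) (hopen : IsOpen Ω) (hdense : Dense Ω) (hne : Ω.Nonempty)
    (SH Dp : (↥Ω → EReal) → Prop)
    (hshiftSH : ∀ (u : ↥Ω → EReal) (c : ℝ), SH u → SH (fun y => u y + (c : EReal)))
    (hshiftDp : ∀ (u : ↥Ω → EReal) (c : ℝ), Dp u → Dp (fun y => u y + (c : EReal)))
    (f : X → EReal) (husc : UpperSemicontinuous f) :
    (∀ z, lW Ω SH (fun y : ↥Ω => f y) z ≤
        lP Ω SH (fun x : {x : X // x ∉ Ω} => f x) z) ∧
    (∀ z, lW Ω (fun u => SH u ∧ Dp u) (fun y : ↥Ω => f y) z ≤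
        lP Ω (fun u => SH u ∧ Dp u) (fun x : {x : X // x ∉ Ω} => f x) z) ∧
    ((∀ x : X, x ∉ Ω → f x ≠ ⊤) →
      (∀ z, uW Ω SH (fun y : ↥Ω => f y) z ≤
          uP Ω SH (fun x : {x : X // x ∉ Ω} => f x) z) ∧
      (∀ z, uW Ω (fun u => SH u ∧ Dp u) (fun y : ↥Ω => f y) z ≤
          uP Ω (fun u => SH u ∧ Dp u) (fun x : {x : X // x ∉ Ω} => f x) z)) :=
  stmt_17_general Ω SH Dp hshiftSH hshiftDp f husc
end
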